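/- arXiv:2402.05041 — 5 statements merged into one kernel-verified Lean document; each statement's English description precedes it below -/
import Mathlib

section
/- For any ε ∈ (0,1), the ε-relaxation time t_rel(ε) satisfies t_rel(ε) ≤ t₀(ε) ≤ 2 t_rel(ε), where t₀(ε) is the infimum of (1/ν)log(1/ε) + T over all pairs (ν,T) ∈ [0,∞)² for which the semigroup is T-delayed exponentially contractive with rate ν. -/
open MeasureTheory Real

/-- Iterating the one-step contraction bound along the semigroup. -/
lemma eps_relax_iter_bound {E : Type*} [NormedAddCommGroup E] [InnerProductSpace ℝ E]
    (P : ℝ → E →L[ℝ] E) (H₀ : Submodule ℝ E)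
    (hP0 : P 0 = ContinuousLinearMap.id ℝ E)
    (hsg : ∀ s t : ℝ, 0 ≤ s → 0 ≤ t → P (s + t) = (P s).comp (P t))
    (hinv : ∀ t : ℝ, 0 ≤ t → ∀ f ∈ H₀, P t f ∈ H₀)
    (ε τ : ℝ) (hε0 : 0 ≤ ε) (hτ : 0 ≤ τ)
    (hb : ∀ f ∈ H₀, ‖P τ f‖ ≤ ε * ‖f‖) :
    ∀ n : ℕ, ∀ f ∈ H₀, ‖P ((n : ℝ) * τ) f‖ ≤ ε ^ n * ‖f‖ := by
  intro n
  induction n with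
  | zero => intro f hf; simp [hP0]
  | succ n ih =>
    intro f hf
    have h1 : ((n + 1 : ℕ) : ℝ) * τ = τ + (n : ℝ) * τ := by push_cast; ring
    rw [h1, hsg τ ((n : ℝ) * τ) hτ (by positivity), ContinuousLinearMap.comp_apply]
    calc ‖P τ (P ((n : ℝ) * τ) f)‖ ≤ ε * ‖P ((n : ℝ) * τ) f‖ :=
          hb _ (hinv _ (by positivity) f hf)
      _ ≤ ε * (ε ^ n * ‖f‖) := mul_le_mul_of_nonneg_left (ih f hf) hε0
      _ = ε ^ (n + 1) * ‖f‖ := by ring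

/-- For `ε ∈ (0,1)`, the `ε`-relaxation time satisfies
`t_rel(ε) ≤ t₀(ε) ≤ 2 t_rel(ε)`, where `t₀(ε)` is the infimum of
`(1/ν) log(1/ε) + T` over all pairs `(ν,T)` for which the semigroup is
`T`-delayed exponentially contractive with rate `ν`. -/
theorem eps_relaxation_time_comparison
    {E : Type*} [NormedAddCommGroup E] [InnerProductSpace ℝ E]
    (P : ℝ → E →L[ℝ] E) (H₀ : Submodule ℝ E)
    (hP0 : P 0 = ContinuousLinearMap.id ℝ E)
    (hsg : ∀ s t : ℝ, 0 ≤ s → 0 ≤ t → P (s + t) = (P s).comp (P t))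
    (hinv : ∀ t : ℝ, 0 ≤ t → ∀ f ∈ H₀, P t f ∈ H₀)
    (hcont : ∀ f : E, Continuous fun t => P t f)
    (hcontr : ∀ f : E, ∀ s t : ℝ, 0 ≤ s → s ≤ t → ‖P t f‖ ≤ ‖P s f‖)
    (ε : ℝ) (hε : ε ∈ Set.Ioo (0:ℝ) 1)
    (trel t0 : ℝ)
    (htrel : trel = sInf {t : ℝ | 0 ≤ t ∧ ∀ f ∈ H₀, ‖P t f‖ ≤ ε * ‖f‖})
    (hne : {t : ℝ | 0 ≤ t ∧ ∀ f ∈ H₀, ‖P t f‖ ≤ ε * ‖f‖}.Nonempty)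
    (ht0 : t0 = sInf {s : ℝ | ∃ ν T : ℝ, 0 < ν ∧ 0 ≤ T ∧
        (∀ f ∈ H₀, ∀ t : ℝ, 0 ≤ t → ‖P t f‖ ≤ Real.exp (-ν * (t - T)) * ‖f‖) ∧
        s = (1/ν) * Real.log ε⁻¹ + T}) :
    trel ≤ t0 ∧ t0 ≤ 2 * trel := by
  obtain ⟨hε0, hε1⟩ := hε
  set S : Set ℝ := {t : ℝ | 0 ≤ t ∧ ∀ f ∈ H₀, ‖P t f‖ ≤ ε * ‖f‖} with hS
  set A : Set ℝ := {s : ℝ | ∃ ν T : ℝ, 0 < ν ∧ 0 ≤ T ∧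
      (∀ f ∈ H₀, ∀ t : ℝ, 0 ≤ t → ‖P t f‖ ≤ Real.exp (-ν * (t - T)) * ‖f‖) ∧
      s = (1/ν) * Real.log ε⁻¹ + T} with hA
  have hL : 0 < Real.log ε⁻¹ := Real.log_pos ((one_lt_inv₀ hε0).mpr hε1)
  set L : ℝ := Real.log ε⁻¹ with hLdef
  have hSbdd : BddBelow S := ⟨0, fun t ht => ht.1⟩
  have hAbdd : BddBelow A := by
    refine ⟨0, fun s hs => ?_⟩
    obtain ⟨ν, T, hν, hT, _, rfl⟩ := hs
    have : 0 < 1 / ν * L := by positivity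
    linarith
  have htrel0 : 0 ≤ trel := htrel ▸ le_csInf hne fun t ht => ht.1
  -- key construction: from τ ∈ S, τ > 0, build a delayed exponential contraction
  have key : ∀ τ : ℝ, τ ∈ S → 0 < τ → (2 * τ) ∈ A := by
    intro τ hτS hτ
    set ν : ℝ := L / τ with hνdef
    have hνpos : 0 < ν := div_pos hL hτ
    have hντ : ν * τ = L := div_mul_cancel₀ _ hτ.ne'
    have h2τ : (2:ℝ) * τ = 1/ν * L + τ := by
      rw [hνdef, one_div_div, div_mul_cancel₀ _ hL.ne']; ring
    refine ⟨ν, τ, hνpos, hτ.le, ?_, h2τ⟩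
    intro f hf t ht
    set n : ℕ := ⌊t / τ⌋₊ with hndef
    have hdiv : 0 ≤ t / τ := div_nonneg ht hτ.le
    have h1 : (n : ℝ) * τ ≤ t := by
      have := Nat.floor_le hdiv
      calc (n : ℝ) * τ ≤ (t / τ) * τ := mul_le_mul_of_nonneg_right this hτ.le
        _ = t := by field_simp
    have h2 : t < ((n : ℝ) + 1) * τ := by
      have := Nat.lt_floor_add_one (t / τ)
      calc t = (t / τ) * τ := by field_simp
        _ < ((n : ℝ) + 1) * τ := by
            apply mul_lt_mul_of_pos_right _ hτ
            exact_mod_cast this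
    calc ‖P t f‖ ≤ ‖P ((n : ℝ) * τ) f‖ := hcontr f _ t (by positivity) h1
      _ ≤ ε ^ n * ‖f‖ :=
          eps_relax_iter_bound P H₀ hP0 hsg hinv ε τ hε0.le hτ.le hτS.2 n f hf
      _ ≤ Real.exp (-ν * (t - τ)) * ‖f‖ := by
          apply mul_le_mul_of_nonneg_right _ (norm_nonneg f)
          have hεexp : ε = Real.exp (Real.log ε) := (Real.exp_log hε0).symm
          have hlogε : Real.log ε = -L := by
            rw [hLdef, Real.log_inv]; ring
          rw [hεexp, ← Real.exp_nat_mul]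
          apply Real.exp_le_exp.mpr
          rw [hlogε]
          nlinarith [hντ, hνpos, h2]
  -- trivial case helper: if 0 ∈ S then H₀ = ⊥ and A contains arbitrarily small elems
  have hzero : (0 : ℝ) ∈ S → ∀ ν : ℝ, 0 < ν → ((1/ν) * L) ∈ A := by
    intro h0 ν hν
    refine ⟨ν, 0, hν, le_refl 0, ?_, by ring⟩
    intro f hf t ht
    have hf0 : f = 0 := by
      have := h0.2 f hf
      rw [hP0] at this
      simp only [ContinuousLinearMap.id_apply] at this
      have : ‖f‖ ≤ 0 := by nlinarith [norm_nonneg f]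
      simpa [norm_le_zero_iff] using this
    subst hf0
    simp only [map_zero, norm_zero]
    positivity
  constructor
  · -- trel ≤ t0
    rw [htrel, ht0]
    have hAne : A.Nonempty := by
      obtain ⟨τ, hτS⟩ := hne
      rcases eq_or_lt_of_le hτS.1 with h | h
      · exact ⟨(1/1) * L, hzero (h ▸ hτS) 1 one_pos⟩
      · exact ⟨2 * τ, key τ hτS h⟩
    apply le_csInf hAne
    intro s hs
    obtain ⟨ν, T, hν, hT, hb, rfl⟩ := hs
    apply csInf_le hSbdd
    have hspos : 0 ≤ (1/ν) * L + T := by positivity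
    refine ⟨hspos, fun f hf => ?_⟩
    have := hb f hf ((1/ν) * L + T) hspos
    have heq : -ν * ((1/ν) * L + T - T) = -L := by field_simp; ring
    rw [heq] at this
    have hexp : Real.exp (-L) = ε := by
      rw [hLdef, ← Real.log_inv, Real.exp_log (by positivity)]
      simp
    rw [hexp] at this
    exact this
  · -- t0 ≤ 2 trel
    by_cases h0 : (0 : ℝ) ∈ S
    · -- trel = 0 and t0 ≤ 0
      have htrel_le : trel ≤ 0 := htrel ▸ csInf_le hSbdd h0
      have ht0le : ∀ δ : ℝ, 0 < δ → t0 ≤ δ := by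
        intro δ hδ
        have hmem := hzero h0 (L / δ) (div_pos hL hδ)
        have : (1 / (L / δ)) * L = δ := by field_simp
        rw [ht0]
        calc sInf A ≤ (1 / (L / δ)) * L := csInf_le hAbdd hmem
          _ = δ := this
      have : t0 ≤ 0 := le_of_forall_pos_le_add (by intro δ hδ; simpa using ht0le δ hδ)
      linarith
    · -- all elements of S are positive
      have hpos : ∀ τ ∈ S, 0 < τ := by
        intro τ hτ
        rcases eq_or_lt_of_le hτ.1 with h | h
        · exact absurd (h ▸ hτ) h0
        · exact h
      have : ∀ τ ∈ S, t0 / 2 ≤ τ := by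
        intro τ hτ
        have := ht0 ▸ csInf_le hAbdd (key τ hτ (hpos τ hτ))
        linarith
      have := htrel ▸ le_csInf hne this
      linarith
end

section
/- Let (hat L, dom(hat L)) on L²(μ⊗κ) be a second-order lift of a reversible generator (L, dom(L)) on L²(μ). Then the singular value gap of hat L is at most the square root of twice the spectral gap of L: sing(hat L) ≤ √(2 gap(L)). -/
open MeasureTheory Real

lemma my_sqrt_add_le (a b : ℝ) (ha : 0 ≤ a) (hb : 0 ≤ b) :
    Real.sqrt (a + b) ≤ Real.sqrt a + Real.sqrt b := by
  have h : a + b ≤ (Real.sqrt a + Real.sqrt b)^2 := by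
    nlinarith [Real.sq_sqrt ha, Real.sq_sqrt hb,
      mul_nonneg (Real.sqrt_nonneg a) (Real.sqrt_nonneg b)]
  calc Real.sqrt (a + b) ≤ Real.sqrt ((Real.sqrt a + Real.sqrt b)^2) := Real.sqrt_le_sqrt h
    _ = Real.sqrt a + Real.sqrt b := Real.sqrt_sq (by positivity)

/-- If `(hatL, Dhat)` on `L²(μ⊗κ)` is a second-order lift of a reversible
generator `(L, D)` on `L²(μ)` (with `ι f = f ∘ π` the isometric embedding), then
`sing(hatL) ≤ √(2 gap(L))`, where `gap(L)` is characterised variationally via the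
Dirichlet form `E(f,f) = -⟨f, Lf⟩`. -/
theorem sing_of_lift_le_sqrt_two_gap
    {E F : Type*} [NormedAddCommGroup E] [InnerProductSpace ℝ E]
    [NormedAddCommGroup F] [InnerProductSpace ℝ F]
    (ι : E →ₗ[ℝ] F) (hι : ∀ f : E, ‖ι f‖ = ‖f‖)
    (E₀ : Submodule ℝ E) (F₀ : Submodule ℝ F)
    (D : Submodule ℝ E) (Dhat : Set F)
    (L : E → E) (hatL : F → F)
    (hdom : ∀ f ∈ D, ι f ∈ Dhat)
    (hmean : ∀ f ∈ E₀, ι f ∈ F₀)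
    (hDirichlet : ∀ f ∈ D, 0 ≤ -(inner ℝ f (L f) : ℝ))
    (hlift2 : ∀ f ∈ D, (1/2) * ‖hatL (ι f)‖^2 = -(inner ℝ f (L f) : ℝ))
    (gapL singhat : ℝ)
    (hgap : gapL = sInf {r : ℝ | ∃ f, f ∈ D ∧ f ∈ E₀ ∧ f ≠ 0 ∧
      r = -(inner ℝ f (L f) : ℝ) / ‖f‖^2})
    (hsing : singhat = sInf {r : ℝ | ∃ G, G ∈ Dhat ∧ G ∈ F₀ ∧ G ≠ 0 ∧
      r = ‖hatL G‖ / ‖G‖})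
    (hnonempty : ∃ f, f ∈ D ∧ f ∈ E₀ ∧ f ≠ 0) :
    singhat ≤ Real.sqrt (2 * gapL) := by
  set S1 := {r : ℝ | ∃ f, f ∈ D ∧ f ∈ E₀ ∧ f ≠ 0 ∧ r = -(inner ℝ f (L f) : ℝ) / ‖f‖^2} with hS1
  set S2 := {r : ℝ | ∃ G, G ∈ Dhat ∧ G ∈ F₀ ∧ G ≠ 0 ∧ r = ‖hatL G‖ / ‖G‖} with hS2
  have hS2bdd : BddBelow S2 := ⟨0, by rintro r ⟨G, _, _, _, rfl⟩; positivity⟩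
  -- key: for f admissible, singhat ≤ sqrt(2 * rayleigh f)
  have key : ∀ f, f ∈ D → f ∈ E₀ → f ≠ 0 →
      singhat ≤ Real.sqrt (2 * (-(inner ℝ f (L f) : ℝ) / ‖f‖^2)) := by
    intro f hfD hfE hfne
    have hfnorm : (0:ℝ) < ‖f‖ := norm_pos_iff.mpr hfne
    have hιne : ι f ≠ 0 := by
      intro h
      have := hι f
      rw [h, norm_zero] at this
      exact hfne (norm_eq_zero.mp this.symm)
    have hmem : ‖hatL (ι f)‖ / ‖ι f‖ ∈ S2 :=
      ⟨ι f, hdom f hfD, hmean f hfE, hιne, rfl⟩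
    have h1 : singhat ≤ ‖hatL (ι f)‖ / ‖ι f‖ := hsing ▸ csInf_le hS2bdd hmem
    have hnormL : ‖hatL (ι f)‖ = Real.sqrt (2 * (-(inner ℝ f (L f) : ℝ))) := by
      have h2 := hlift2 f hfD
      have : ‖hatL (ι f)‖^2 = 2 * (-(inner ℝ f (L f) : ℝ)) := by linarith
      rw [← this, Real.sqrt_sq (norm_nonneg _)]
    have heq : ‖hatL (ι f)‖ / ‖ι f‖ = Real.sqrt (2 * (-(inner ℝ f (L f) : ℝ) / ‖f‖^2)) := by
      rw [hι f, hnormL, show 2 * (-(inner ℝ f (L f) : ℝ) / ‖f‖^2)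
        = (2 * -(inner ℝ f (L f) : ℝ)) / ‖f‖^2 by ring,
        Real.sqrt_div (mul_nonneg (by norm_num) (hDirichlet f hfD)),
        Real.sqrt_sq hfnorm.le]
    rw [heq] at h1; exact h1
  -- S1 properties
  have hS1ne : S1.Nonempty := by
    obtain ⟨f, h1, h2, h3⟩ := hnonempty
    exact ⟨_, f, h1, h2, h3, rfl⟩
  have hgap0 : 0 ≤ gapL := by
    rw [hgap]
    apply le_csInf hS1ne
    rintro r ⟨f, hfD, _, hfne, rfl⟩
    have := hDirichlet f hfD
    positivity
  apply le_of_forall_pos_le_add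
  intro ε hε
  obtain ⟨r, hr, hrlt⟩ := Real.lt_sInf_add_pos hS1ne (show (0:ℝ) < ε^2/2 by positivity)
  obtain ⟨f, hfD, hfE, hfne, rfl⟩ := hr
  calc singhat ≤ Real.sqrt (2 * (-(inner ℝ f (L f) : ℝ) / ‖f‖^2)) := key f hfD hfE hfne
    _ ≤ Real.sqrt (2 * gapL + ε^2) := by
        apply Real.sqrt_le_sqrt
        rw [← hgap] at hrlt
        nlinarith
    _ ≤ Real.sqrt (2 * gapL) + Real.sqrt (ε^2) :=
        my_sqrt_add_le _ _ (by positivity) (by positivity)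
    _ = Real.sqrt (2 * gapL) + ε := by rw [Real.sqrt_sq hε.le]
end

section
/- For the 2×2 matrix A = [[0, -1],[1, 2]] (critical Langevin drift matrix with γ = 2 for the standard Gaussian potential U(x) = x²/2), the operator norm of the matrix exponential satisfies ‖exp(−tA)‖ = √(1 + 2t² + 2t√(1+t²)) · e^{−t} for all t ≥ 0. -/
open Real
set_option maxHeartbeats 1000000
set_option synthInstance.maxHeartbeats 400000

noncomputable def T (t : ℝ) := Matrix.toEuclideanCLM (𝕜 := ℝ)
  (!![1+t, t; -t, 1-t] : Matrix (Fin 2) (Fin 2) ℝ)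

theorem exp_of_sq_eq_zero' {𝔸 : Type*} [NormedRing 𝔸] [NormedAlgebra ℝ 𝔸] [CompleteSpace 𝔸]
    (N : 𝔸) (h : N ^ 2 = 0) : NormedSpace.exp N = 1 + N := by
  rw [NormedSpace.exp_eq_tsum ℝ]
  show (∑' n : ℕ, ((n.factorial : ℝ)⁻¹ • N ^ n)) = 1 + N
  rw [tsum_eq_sum (s := Finset.range 2) ?_]
  · simp [Finset.sum_range_succ, Nat.factorial]
  · intro n hn
    have h2 : 2 ≤ n := by simp at hn; omega
    have : N ^ n = 0 := by
      calc N ^ n = N ^ 2 * N ^ (n - 2) := by rw [← pow_add]; congr 1; omega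
      _ = 0 := by rw [h, zero_mul]
    simp [this]

theorem exp_eq (t : ℝ) :
    NormedSpace.exp
        ((-t) • (Matrix.toEuclideanCLM (𝕜 := ℝ) (!![0, -1; 1, 2] : Matrix (Fin 2) (Fin 2) ℝ)))
      = Real.exp (-t) • T t := by
  set A : Matrix (Fin 2) (Fin 2) ℝ := !![0, -1; 1, 2] with hA
  set L := Matrix.toEuclideanCLM (𝕜 := ℝ) A with hL
  set Nm : Matrix (Fin 2) (Fin 2) ℝ := (-t) • (A - 1) with hNm
  have hNm2 : Nm ^ 2 = 0 := by
    ext i j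
    fin_cases i <;> fin_cases j <;>
      simp [hNm, hA, pow_two, Matrix.mul_apply, Fin.sum_univ_two, Matrix.one_apply] <;> ring
  set N := Matrix.toEuclideanCLM (𝕜 := ℝ) Nm with hN
  have hN2 : N ^ 2 = 0 := by rw [hN, ← map_pow, hNm2, map_zero]
  have hsplit : (-t) • L = algebraMap ℝ _ (-t) + N := by
    rw [hN, hNm, hL, map_smul, map_sub, map_one, smul_sub,
      Algebra.algebraMap_eq_smul_one]
    abel
  let +nondep : NormedAlgebra ℚ (EuclideanSpace ℝ (Fin 2) →L[ℝ] EuclideanSpace ℝ (Fin 2)) :=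
    .restrictScalars ℚ ℝ _
  rw [hsplit, NormedSpace.exp_add_of_commute (Algebra.commutes _ _),
    ← NormedSpace.algebraMap_exp_comm, exp_of_sq_eq_zero' N hN2,
    ← Real.exp_eq_exp_ℝ, Algebra.algebraMap_eq_smul_one, smul_mul_assoc, one_mul,
    smul_right_inj (Real.exp_ne_zero _)]
  rw [T, show (1 : EuclideanSpace ℝ (Fin 2) →L[ℝ] EuclideanSpace ℝ (Fin 2)) + N
      = Matrix.toEuclideanCLM (𝕜 := ℝ) (1 + Nm) by rw [hN, map_add, map_one]]
  congr 1
  ext i j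
  fin_cases i <;> fin_cases j <;>
    simp [hNm, hA, Matrix.one_apply] <;> ring

theorem norm_T (t : ℝ) (ht : 0 ≤ t) :
    ‖T t‖ = Real.sqrt (1 + 2*t^2 + 2*t*Real.sqrt (1 + t^2)) := by
  set s := Real.sqrt (1 + t^2) with hs
  have hs0 : 0 ≤ s := Real.sqrt_nonneg _
  have hs2 : s ^ 2 = 1 + t ^ 2 := Real.sq_sqrt (by positivity)
  have hs1 : 1 ≤ s := by nlinarith
  have hlam0 : 0 ≤ 1 + 2*t^2 + 2*t*s := by nlinarith [mul_nonneg ht hs0]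
  have happly0 : ∀ x : EuclideanSpace ℝ (Fin 2), (T t x) 0 = (1+t) * x 0 + t * x 1 := by
    intro x
    have h0 := congrFun (Matrix.ofLp_toEuclideanCLM (𝕜 := ℝ)
      (!![1+t, t; -t, 1-t] : Matrix (Fin 2) (Fin 2) ℝ) x) 0
    simpa [Matrix.toLin'_apply, Matrix.mulVec, dotProduct, Fin.sum_univ_two, T] using h0
  have happly1 : ∀ x : EuclideanSpace ℝ (Fin 2), (T t x) 1 = (-t) * x 0 + (1-t) * x 1 := by
    intro x
    have h1 := congrFun (Matrix.ofLp_toEuclideanCLM (𝕜 := ℝ)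
      (!![1+t, t; -t, 1-t] : Matrix (Fin 2) (Fin 2) ℝ) x) 1
    simpa [Matrix.toLin'_apply, Matrix.mulVec, dotProduct, Fin.sum_univ_two, T] using h1
  have hnorm : ∀ x : EuclideanSpace ℝ (Fin 2), ‖x‖ = Real.sqrt ((x 0)^2 + (x 1)^2) := by
    intro x
    rw [EuclideanSpace.norm_eq]
    simp [Fin.sum_univ_two, Real.norm_eq_abs, sq_abs]
  apply le_antisymm
  · apply ContinuousLinearMap.opNorm_le_bound _ (Real.sqrt_nonneg _)
    intro x
    rw [hnorm (T t x), hnorm x, happly0, happly1, ← Real.sqrt_mul hlam0]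
    apply Real.sqrt_le_sqrt
    have h1 : 0 ≤ 2*t*(t * x 0 - (s+1) * x 1)^2 := by positivity
    have h2 : (s+1) * ((1+2*t^2+2*t*s)*((x 0)^2+(x 1)^2)
        - (((1+t)* x 0 + t * x 1)^2 + (-t * x 0 + (1-t) * x 1)^2))
        = 2*t*(t * x 0 - (s+1) * x 1)^2 := by linear_combination (2*t*(x 0)^2) * hs2
    have h3 : (0:ℝ) < s + 1 := by linarith
    nlinarith [h1, h2, h3]
  · set a := Real.sqrt (s + 1) with ha
    set b := Real.sqrt (s - 1) with hb
    have ha2 : a ^ 2 = s + 1 := Real.sq_sqrt (by nlinarith)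
    have hb2 : b ^ 2 = s - 1 := Real.sq_sqrt (by nlinarith)
    have hab : a * b = t := by
      rw [ha, hb, ← Real.sqrt_mul (by nlinarith), show (s+1)*(s-1) = t^2 by nlinarith]
      exact Real.sqrt_sq ht
    set v : EuclideanSpace ℝ (Fin 2) := (WithLp.equiv 2 (Fin 2 → ℝ)).symm ![a, b] with hv
    have hv0 : v 0 = a := rfl
    have hv1 : v 1 = b := rfl
    have hvnorm : ‖v‖ = Real.sqrt (2*s) := by
      rw [hnorm, hv0, hv1]; congr 1; nlinarith
    have hTv : ‖T t v‖ = Real.sqrt (1 + 2*t^2 + 2*t*s) * Real.sqrt (2*s) := by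
      rw [hnorm, happly0, happly1, hv0, hv1, ← Real.sqrt_mul hlam0]
      congr 1
      linear_combination (1+2*t+2*t^2)*ha2 + (1-2*t+2*t^2)*hb2 + (4*t^2)*hab - 4*t*hs2
    have hvpos : 0 < ‖v‖ := by
      rw [hvnorm]; apply Real.sqrt_pos.mpr; nlinarith
    have hle := (T t).le_opNorm v
    rw [hTv, hvnorm] at hle
    exact le_of_mul_le_mul_right hle (by rw [hvnorm] at hvpos; exact hvpos)

/-- For the critical Langevin drift matrix `A = [[0,-1],[1,2]]`, the
operator norm (largest singular value, realised as the norm of the induced operator on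
Euclidean space) of `exp(-tA)` equals `√(1 + 2t² + 2t√(1+t²)) e^{-t}` for `t ≥ 0`. -/
theorem opNorm_exp_neg_t_smul_critical_langevin_matrix (t : ℝ) (ht : 0 ≤ t) :
    ‖NormedSpace.exp
        ((-t) • (Matrix.toEuclideanCLM (𝕜 := ℝ) (!![0, -1; 1, 2] : Matrix (Fin 2) (Fin 2) ℝ)))‖
      = Real.sqrt (1 + 2*t^2 + 2*t*Real.sqrt (1 + t^2)) * Real.exp (-t) := by
  rw [exp_eq]
  rw [norm_smul (Real.exp (-t)) (T t), Real.norm_eq_abs, Real.abs_exp, norm_T t ht, mul_comm]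
end

section
/- Space-time Poincaré inequality implies exponential contractivity in T-average: assume hat L satisfies STPI(T, C₀, C₁), i.e. ‖f − ∫f d(μ̄⊗κ)‖² ≤ C₀‖Af‖² + C₁‖f − Π_v f‖² in L²(μ̄⊗κ) for all f ∈ dom(A), where Af = −∂_t f + hat L f. Then for every γ > 0 the semigroup (hat P_t^{(γ)}) with generator hat L^{(γ)} = hat L + γ(Π_v − I) is exponentially contractive in T-average with rate ν = γ/(γ²C₀ + C₁): (1/T)∫_t^{t+T}‖hat P_s^{(γ)} f‖ ds ≤ e^{−νt}‖f‖ for all mean-zero f. -/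
open MeasureTheory Real

set_option maxHeartbeats 1000000

/-- A space-time Poincaré inequality for `hatL` (here stated along
differentiable curves in `L²(μ̂)`, as it is applied to `s ↦ hatP_{t+s}f`) implies that
for every `γ > 0` the semigroup with generator `hatL + γ(Π_v − I)` is exponentially
contractive in `T`-average with rate `ν = γ/(γ²C₀ + C₁)`. -/
theorem stpi_implies_exponential_contractivity_in_T_average
    {H : Type*} [NormedAddCommGroup H] [InnerProductSpace ℝ H]
    (P : ℝ → H →L[ℝ] H) (hatL : H → H) (Piv : H →L[ℝ] H)
    (D : Set H) (H₀ : Submodule ℝ H)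
    (T C₀ C₁ γ : ℝ) (hT : 0 < T) (hC₀ : 0 < C₀) (hC₁ : 0 < C₁) (hγ : 0 < γ)
    (hP0 : P 0 = ContinuousLinearMap.id ℝ H)
    (hsg : ∀ s t : ℝ, 0 ≤ s → 0 ≤ t → P (s + t) = (P s).comp (P t))
    (hproj : ∀ f : H, (inner ℝ f (Piv f - f) : ℝ) = -‖Piv f - f‖^2)
    (hneg : ∀ f ∈ D, (inner ℝ f (hatL f) : ℝ) ≤ 0)
    (hinv : ∀ t : ℝ, 0 ≤ t → ∀ f, f ∈ D → f ∈ H₀ → P t f ∈ D ∧ P t f ∈ H₀)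
    (hderiv : ∀ f, f ∈ D → f ∈ H₀ → ∀ t : ℝ, 0 ≤ t →
      HasDerivAt (fun s => P s f) (hatL (P t f) + γ • (Piv (P t f) - P t f)) t)
    (hstpi : ∀ u u' : ℝ → H,
      (∀ t ∈ Set.Icc (0:ℝ) T, HasDerivAt u (u' t) t ∧ u t ∈ D ∧ u t ∈ H₀) →
      (∫ t in (0:ℝ)..T, ‖u t‖^2) ≤
        C₀ * (∫ t in (0:ℝ)..T, ‖-(u' t) + hatL (u t)‖^2)
          + C₁ * (∫ t in (0:ℝ)..T, ‖u t - Piv (u t)‖^2)) :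
    ∀ f, f ∈ D → f ∈ H₀ → ∀ t : ℝ, 0 ≤ t →
      (1/T) * (∫ s in t..(t+T), ‖P s f‖)
        ≤ Real.exp (-(γ/(γ^2*C₀ + C₁)) * t) * ‖f‖ := by
  intro f hfD hfH0 t ht
  have hden : (0:ℝ) < γ^2*C₀ + C₁ := by positivity
  set ν : ℝ := γ / (γ^2*C₀ + C₁) with hν_def
  have hν : 0 < ν := div_pos hγ hden
  set u : ℝ → H := fun s => P s f with hu_def
  set u' : ℝ → H := fun s => hatL (u s) + γ • (Piv (u s) - u s) with hu'_def
  have hu0 : u 0 = f := by simp [hu_def, hP0]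
  have hmem : ∀ s : ℝ, 0 ≤ s → u s ∈ D ∧ u s ∈ H₀ := fun s hs => hinv s hs f hfD hfH0
  have hud : ∀ s : ℝ, 0 ≤ s → HasDerivAt u (u' s) s := fun s hs => hderiv f hfD hfH0 s hs
  have hucont : ∀ s : ℝ, 0 ≤ s → ContinuousAt u s := fun s hs => (hud s hs).continuousAt
  set g : ℝ → ℝ := fun s => ‖u s‖^2 with hg_def
  set q : ℝ → ℝ := fun s => ‖u s - Piv (u s)‖^2 with hq_def
  have hgcontAt : ∀ s : ℝ, 0 ≤ s → ContinuousAt g s := by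
    intro s hs
    exact ((hucont s hs).norm).pow 2
  have hqcontAt : ∀ s : ℝ, 0 ≤ s → ContinuousAt q s := by
    intro s hs
    exact (((hucont s hs).sub (Piv.continuous.continuousAt.comp (hucont s hs))).norm).pow 2
  have hncontAt : ∀ s : ℝ, 0 ≤ s → ContinuousAt (fun r => ‖u r‖) s := by
    intro s hs; exact (hucont s hs).norm
  -- interval integrability of continuous-on-[0,∞) functions
  have hIntOn : ∀ (φ : ℝ → ℝ), (∀ s : ℝ, 0 ≤ s → ContinuousAt φ s) →
      ∀ a b : ℝ, 0 ≤ a → 0 ≤ b → IntervalIntegrable φ volume a b := by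
    intro φ hφ a b ha hb
    apply ContinuousOn.intervalIntegrable
    intro x hx
    exact (hφ x (le_trans (le_min ha hb) hx.1)).continuousWithinAt
  have hq0 : ∀ s : ℝ, 0 ≤ q s := by intro s; simp only [hq_def]; positivity
  have hg0 : ∀ s : ℝ, 0 ≤ g s := by intro s; simp only [hg_def]; positivity
  -- the key dissipativity bound
  have hkey : ∀ s : ℝ, 0 ≤ s → (2:ℝ) * inner ℝ (u s) (u' s) ≤ -(2*γ) * q s := by
    intro s hs
    have h1 : (inner ℝ (u s) (u' s) : ℝ)
        = inner ℝ (u s) (hatL (u s)) + γ * inner ℝ (u s) (Piv (u s) - u s) := by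
      simp only [hu'_def, inner_add_right, real_inner_smul_right]
    have h2 := hneg (u s) (hmem s hs).1
    have h3 := hproj (u s)
    have h4 : ‖Piv (u s) - u s‖^2 = q s := by
      simp only [hq_def]; rw [norm_sub_rev]
    rw [h1, h3, h4] at *
    nlinarith [hq0 s]
  -- derivative of g
  have hgd : ∀ s : ℝ, 0 ≤ s → HasDerivAt g (2 * inner ℝ (u s) (u' s)) s := by
    intro s hs
    have h1 : HasDerivAt (fun r => (inner ℝ (u r) (u r) : ℝ))
        ((inner ℝ (u s) (u' s) : ℝ) + inner ℝ (u' s) (u s)) s :=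
      (hud s hs).inner ℝ (hud s hs)
    have h2 : (fun r => (inner ℝ (u r) (u r) : ℝ)) = g := by
      funext r; simp only [hg_def]; exact real_inner_self_eq_norm_sq _
    have h3 : (inner ℝ (u s) (u' s) : ℝ) + inner ℝ (u' s) (u s) = 2 * inner ℝ (u s) (u' s) := by
      rw [real_inner_comm (u' s) (u s)]; ring
    rw [h2, h3] at h1; exact h1
  -- derivative of the primitive of q
  have hQd : ∀ x : ℝ, 0 < x → HasDerivAt (fun s => ∫ r in (0:ℝ)..s, q r) (q x) x := by
    intro x hx
    refine intervalIntegral.integral_hasDerivAt_right (hIntOn q hqcontAt 0 x le_rfl hx.le)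
      ?_ (hqcontAt x hx.le)
    exact ContinuousAt.stronglyMeasurableAtFilter isOpen_Ioi
      (fun y hy => hqcontAt y (le_of_lt hy)) x hx
  have hGd : ∀ x : ℝ, 0 < x → HasDerivAt (fun s => ∫ r in (0:ℝ)..s, g r) (g x) x := by
    intro x hx
    refine intervalIntegral.integral_hasDerivAt_right (hIntOn g hgcontAt 0 x le_rfl hx.le)
      ?_ (hgcontAt x hx.le)
    exact ContinuousAt.stronglyMeasurableAtFilter isOpen_Ioi
      (fun y hy => hgcontAt y (le_of_lt hy)) x hx
  -- ψ is antitone on [0, M]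
  have hψanti : ∀ M : ℝ, 0 ≤ M →
      AntitoneOn (fun s => g s + (2*γ) * ∫ r in (0:ℝ)..s, q r) (Set.Icc 0 M) := by
    intro M hM
    have hψd : ∀ x : ℝ, 0 < x →
        HasDerivAt (fun s => g s + (2*γ) * ∫ r in (0:ℝ)..s, q r)
          (2 * inner ℝ (u x) (u' x) + (2*γ) * q x) x := by
      intro x hx
      exact (hgd x hx.le).add ((hQd x hx).const_mul (2*γ))
    apply antitoneOn_of_deriv_nonpos (convex_Icc 0 M)
    · apply ContinuousOn.add
      · exact fun x hx => (hgcontAt x hx.1).continuousWithinAt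
      · apply ContinuousOn.mul continuousOn_const
        have := intervalIntegral.continuousOn_primitive_interval'
          (hIntOn q hqcontAt 0 M le_rfl hM) (Set.left_mem_uIcc (a := (0:ℝ)) (b := M))
        rwa [Set.uIcc_of_le hM] at this
    · rw [interior_Icc]
      intro x hx
      exact (hψd x hx.1).differentiableAt.differentiableWithinAt
    · rw [interior_Icc]
      intro x hx
      rw [(hψd x hx.1).deriv]
      have := hkey x hx.1.le
      linarith
  -- g is antitone on [0, M]
  have hganti : ∀ M : ℝ, 0 ≤ M → AntitoneOn g (Set.Icc 0 M) := by
    intro M hM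
    apply antitoneOn_of_deriv_nonpos (convex_Icc 0 M)
    · exact fun x hx => (hgcontAt x hx.1).continuousWithinAt
    · rw [interior_Icc]
      intro x hx
      exact (hgd x hx.1.le).differentiableAt.differentiableWithinAt
    · rw [interior_Icc]
      intro x hx
      rw [(hgd x hx.1.le).deriv]
      have := hkey x hx.1.le
      have := hq0 x
      nlinarith
  -- F and its properties
  set F : ℝ → ℝ := fun s => ∫ r in s..(s+T), g r with hF_def
  set F1 : ℝ → ℝ := fun s => ∫ r in (0:ℝ)..s, g r with hF1_def
  have hFeq : ∀ s : ℝ, 0 ≤ s → F s = F1 (s+T) - F1 s := by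
    intro s hs
    have := intervalIntegral.integral_interval_sub_left
      (hIntOn g hgcontAt 0 (s+T) le_rfl (by linarith))
      (hIntOn g hgcontAt 0 s le_rfl hs)
    simp only [hF_def, hF1_def]
    exact this.symm
  have hFnonneg : ∀ s : ℝ, 0 ≤ s → 0 ≤ F s := by
    intro s hs
    simp only [hF_def]
    exact intervalIntegral.integral_nonneg (by linarith) (fun r _ => hg0 r)
  -- derivative of F
  have hFd : ∀ x : ℝ, 0 < x → HasDerivAt F (g (x+T) - g x) x := by
    intro x hx
    have h1 : HasDerivAt F1 (g x) x := hGd x hx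
    have h2 : HasDerivAt (fun s => F1 (s+T)) (g (x+T)) x :=
      HasDerivAt.comp_add_const x T (hGd (x+T) (by linarith))
    have h3 := h2.sub h1
    refine h3.congr_of_eventuallyEq ?_
    filter_upwards [Ioi_mem_nhds hx] with s hs
    exact hFeq s (le_of_lt hs)
  -- STPI consequence
  have hstpi' : ∀ x : ℝ, 0 ≤ x → F x ≤ (γ^2*C₀ + C₁) * ∫ r in x..(x+T), q r := by
    intro x hx
    have happ := hstpi (fun s => u (x+s)) (fun s => u' (x+s)) ?_
    · have hmid : ∀ s : ℝ, ‖-(u' (x+s)) + hatL (u (x+s))‖^2 = γ^2 * q (x+s) := by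
        intro s
        have : -(u' (x+s)) + hatL (u (x+s)) = (-γ) • (Piv (u (x+s)) - u (x+s)) := by
          simp only [hu'_def]; module
        rw [this, norm_smul, norm_neg, Real.norm_eq_abs, abs_of_pos hγ, mul_pow]
        simp only [hq_def]
        rw [norm_sub_rev]
      have e1 : (∫ s in (0:ℝ)..T, ‖u (x+s)‖^2) = F x := by
        have := intervalIntegral.integral_comp_add_left (a := (0:ℝ)) (b := T)
          (fun y => ‖u y‖^2) x
        simp only [add_zero] at this
        simp only [hF_def, hg_def]
        exact this
      have e2 : (∫ s in (0:ℝ)..T, q (x+s)) = ∫ r in x..(x+T), q r := by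
        have := intervalIntegral.integral_comp_add_left (a := (0:ℝ)) (b := T) q x
        simpa using this
      have e3 : (∫ s in (0:ℝ)..T, ‖-(u' (x+s)) + hatL (u (x+s))‖^2)
          = γ^2 * ∫ r in x..(x+T), q r := by
        calc (∫ s in (0:ℝ)..T, ‖-(u' (x+s)) + hatL (u (x+s))‖^2)
            = ∫ s in (0:ℝ)..T, γ^2 * q (x+s) := by
              apply intervalIntegral.integral_congr
              intro s _; exact hmid s
          _ = γ^2 * ∫ s in (0:ℝ)..T, q (x+s) := intervalIntegral.integral_const_mul _ _
          _ = γ^2 * ∫ r in x..(x+T), q r := by rw [e2]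
      have e4 : (∫ s in (0:ℝ)..T, ‖u (x+s) - Piv (u (x+s))‖^2) = ∫ r in x..(x+T), q r := by
        calc (∫ s in (0:ℝ)..T, ‖u (x+s) - Piv (u (x+s))‖^2)
            = ∫ s in (0:ℝ)..T, q (x+s) := by
              apply intervalIntegral.integral_congr
              intro s _; simp only [hq_def]
          _ = ∫ r in x..(x+T), q r := e2
      rw [e1, e3, e4] at happ
      calc F x ≤ C₀ * (γ^2 * ∫ r in x..(x+T), q r) + C₁ * ∫ r in x..(x+T), q r := happ
        _ = (γ^2*C₀ + C₁) * ∫ r in x..(x+T), q r := by ring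
    · intro s hs
      have hxs : (0:ℝ) ≤ x + s := by linarith [hs.1]
      refine ⟨?_, (hmem (x+s) hxs).1, (hmem (x+s) hxs).2⟩
      exact HasDerivAt.comp_const_add x s (hud (x+s) hxs)
  -- F' ≤ -2ν F
  have hFderiv_le : ∀ x : ℝ, 0 < x → g (x+T) - g x ≤ -(2*ν) * F x := by
    intro x hx
    have hψ := hψanti (x+T) (by linarith)
    have h1 := hψ (Set.mem_Icc.mpr ⟨hx.le, by linarith⟩)
      (Set.mem_Icc.mpr ⟨by linarith, le_rfl⟩) (by linarith)
    have h2 : (∫ r in (0:ℝ)..(x+T), q r) - (∫ r in (0:ℝ)..x, q r)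
        = ∫ r in x..(x+T), q r := by
      exact intervalIntegral.integral_interval_sub_left
        (hIntOn q hqcontAt 0 (x+T) le_rfl (by linarith))
        (hIntOn q hqcontAt 0 x le_rfl hx.le)
    have h3 : g (x+T) - g x ≤ -(2*γ) * ∫ r in x..(x+T), q r := by
      dsimp only at h1
      nlinarith [h2, h1]
    have h4 := hstpi' x hx.le
    have h5 : F x / (γ^2*C₀ + C₁) ≤ ∫ r in x..(x+T), q r := by
      rw [div_le_iff₀ hden]; linarith [h4]
    have h6 : -(2*ν) * F x = -(2*γ) * (F x / (γ^2*C₀ + C₁)) := by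
      rw [hν_def]; field_simp
    rw [h6]
    have := mul_le_mul_of_nonneg_left h5 (by positivity : (0:ℝ) ≤ 2*γ)
    nlinarith
  -- Gronwall: F t ≤ exp(-2νt) * F 0
  have hGron : F t ≤ Real.exp (-(2*ν)*t) * F 0 := by
    have hFcont : ContinuousOn F (Set.Icc 0 t) := by
      have hF1cont : ContinuousOn F1 (Set.Icc 0 (t+T)) := by
        have := intervalIntegral.continuousOn_primitive_interval'
          (hIntOn g hgcontAt 0 (t+T) le_rfl (by linarith))
          (Set.left_mem_uIcc (a := (0:ℝ)) (b := t+T))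
        rwa [Set.uIcc_of_le (by linarith : (0:ℝ) ≤ t+T)] at this
      have hmap : Set.MapsTo (fun s : ℝ => s + T) (Set.Icc 0 t) (Set.Icc 0 (t+T)) := by
        intro s hs
        simp only [Set.mem_Icc] at hs ⊢
        constructor <;> linarith [hs.1, hs.2]
      have h2 : ContinuousOn (fun s => F1 (s+T)) (Set.Icc 0 t) :=
        hF1cont.comp ((continuous_id.add continuous_const).continuousOn) hmap
      have h1 : ContinuousOn F1 (Set.Icc 0 t) :=
        hF1cont.mono (Set.Icc_subset_Icc le_rfl (by linarith))
      exact (h2.sub h1).congr (fun s hs => hFeq s hs.1)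
    have hanti : AntitoneOn (fun s => Real.exp ((2*ν)*s) * F s) (Set.Icc 0 t) := by
      have hGd' : ∀ x : ℝ, 0 < x →
          HasDerivAt (fun s => Real.exp ((2*ν)*s) * F s)
            (Real.exp ((2*ν)*x) * (2*ν) * F x + Real.exp ((2*ν)*x) * (g (x+T) - g x)) x := by
        intro x hx
        have h1 : HasDerivAt (fun s : ℝ => (2*ν)*s) (2*ν) x := by
          simpa using (hasDerivAt_id x).const_mul (2*ν)
        exact (h1.exp).mul (hFd x hx)
      apply antitoneOn_of_deriv_nonpos (convex_Icc 0 t)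
      · exact ((Real.continuous_exp.comp (continuous_const.mul continuous_id)).continuousOn).mul hFcont
      · rw [interior_Icc]
        intro x hx
        exact (hGd' x hx.1).differentiableAt.differentiableWithinAt
      · rw [interior_Icc]
        intro x hx
        rw [(hGd' x hx.1).deriv]
        have h1 := hFderiv_le x hx.1
        have h2 := Real.exp_pos ((2*ν)*x)
        have h3 := hFnonneg x hx.1.le
        nlinarith
    have hGt := hanti (Set.mem_Icc.mpr ⟨le_rfl, ht⟩) (Set.mem_Icc.mpr ⟨ht, le_rfl⟩) ht
    simp only [mul_zero, Real.exp_zero, one_mul] at hGt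
    calc F t = Real.exp (-(2*ν)*t) * (Real.exp ((2*ν)*t) * F t) := by
          rw [← mul_assoc, ← Real.exp_add]; ring_nf; simp
      _ ≤ Real.exp (-(2*ν)*t) * F 0 :=
          mul_le_mul_of_nonneg_left hGt (Real.exp_pos _).le
  -- F 0 ≤ T ‖f‖²
  have hF0 : F 0 ≤ T * ‖f‖^2 := by
    have hmono : ∀ r ∈ Set.Icc (0:ℝ) T, g r ≤ ‖f‖^2 := by
      intro r hr
      have := hganti T hT.le (Set.mem_Icc.mpr ⟨le_rfl, hT.le⟩) hr hr.1
      have hg0' : g 0 = ‖f‖^2 := by simp only [hg_def, hu0]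
      linarith [this, hg0'.le, hg0'.ge]
    have h1 : (∫ r in (0:ℝ)..T, g r) ≤ ∫ _r in (0:ℝ)..T, ‖f‖^2 := by
      apply intervalIntegral.integral_mono_on hT.le
        (hIntOn g hgcontAt 0 T le_rfl hT.le) intervalIntegrable_const hmono
    have h2 : (∫ _r in (0:ℝ)..T, ‖f‖^2) = T * ‖f‖^2 := by
      simp [intervalIntegral.integral_const]
    have h3 : F 0 = ∫ r in (0:ℝ)..T, g r := by simp only [hF_def, zero_add]
    rw [h3]; linarith
  -- Cauchy–Schwarz step
  set A : ℝ := ∫ s in t..(t+T), ‖u s‖ with hA_def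
  have hle : t ≤ t + T := by linarith
  have hA0 : 0 ≤ A := by
    simp only [hA_def]
    exact intervalIntegral.integral_nonneg hle (fun x _ => norm_nonneg _)
  have hIntg : IntervalIntegrable g volume t (t+T) := hIntOn g hgcontAt t (t+T) ht (by linarith)
  have hIntn : IntervalIntegrable (fun s => ‖u s‖) volume t (t+T) :=
    hIntOn _ hncontAt t (t+T) ht (by linarith)
  have hCS : A^2 ≤ T * F t := by
    have hnn : (0:ℝ) ≤ ∫ s in t..(t+T), (‖u s‖ - A/T)^2 :=
      intervalIntegral.integral_nonneg hle (fun x _ => sq_nonneg _)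
    have hexp : ∀ s : ℝ, (‖u s‖ - A/T)^2 = g s - (2*(A/T))*‖u s‖ + (A/T)^2 := by
      intro s; simp only [hg_def]; ring
    have hval : (∫ s in t..(t+T), (‖u s‖ - A/T)^2)
        = F t - (2*(A/T))*A + (A/T)^2 * T := by
      calc (∫ s in t..(t+T), (‖u s‖ - A/T)^2)
          = ∫ s in t..(t+T), (g s - (2*(A/T))*‖u s‖ + (A/T)^2) := by
            apply intervalIntegral.integral_congr
            intro s _; exact hexp s
        _ = (∫ s in t..(t+T), (g s - (2*(A/T))*‖u s‖)) + ∫ _s in t..(t+T), (A/T)^2 := by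
            apply intervalIntegral.integral_add
              (hIntg.sub (hIntn.const_mul _)) intervalIntegrable_const
        _ = ((∫ s in t..(t+T), g s) - ∫ s in t..(t+T), (2*(A/T))*‖u s‖)
              + ∫ _s in t..(t+T), (A/T)^2 := by
            rw [intervalIntegral.integral_sub hIntg (hIntn.const_mul _)]
        _ = F t - (2*(A/T))*A + (A/T)^2 * T := by
            have iF : (∫ s in t..(t+T), g s) = F t := by simp only [hF_def]
            have iA : (∫ s in t..(t+T), ‖u s‖) = A := by simp only [hA_def]
            rw [intervalIntegral.integral_const_mul, intervalIntegral.integral_const,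
              iF, iA, smul_eq_mul]
            ring
    rw [hval] at hnn
    have h1 : (A/T)^2 * T = A^2/T := by field_simp
    have h2 : (2*(A/T))*A = 2*(A^2/T) := by field_simp
    rw [h1, h2] at hnn
    have h3 : A^2/T ≤ F t := by linarith
    calc A^2 = (A^2/T) * T := by field_simp
      _ ≤ F t * T := mul_le_mul_of_nonneg_right h3 hT.le
      _ = T * F t := mul_comm _ _
  -- final assembly
  have hFt : F t ≤ Real.exp (-(2*ν)*t) * (T * ‖f‖^2) :=
    le_trans hGron (mul_le_mul_of_nonneg_left hF0 (Real.exp_pos _).le)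
  have hBsq : (T * (Real.exp (-ν*t) * ‖f‖))^2 = T * (Real.exp (-(2*ν)*t) * (T * ‖f‖^2)) := by
    have he : Real.exp (-ν*t) * Real.exp (-ν*t) = Real.exp (-(2*ν)*t) := by
      rw [← Real.exp_add]; ring_nf
    calc (T * (Real.exp (-ν*t) * ‖f‖))^2
        = T * ((Real.exp (-ν*t) * Real.exp (-ν*t)) * (T * ‖f‖^2)) := by ring
      _ = T * (Real.exp (-(2*ν)*t) * (T * ‖f‖^2)) := by rw [he]
  have hA2 : A^2 ≤ (T * (Real.exp (-ν*t) * ‖f‖))^2 := by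
    rw [hBsq]
    calc A^2 ≤ T * F t := hCS
      _ ≤ T * (Real.exp (-(2*ν)*t) * (T * ‖f‖^2)) :=
          mul_le_mul_of_nonneg_left hFt hT.le
  have hB0 : (0:ℝ) ≤ T * (Real.exp (-ν*t) * ‖f‖) := by positivity
  have hAB : A ≤ T * (Real.exp (-ν*t) * ‖f‖) := by
    calc A = Real.sqrt (A^2) := (Real.sqrt_sq hA0).symm
      _ ≤ Real.sqrt ((T * (Real.exp (-ν*t) * ‖f‖))^2) := Real.sqrt_le_sqrt hA2
      _ = T * (Real.exp (-ν*t) * ‖f‖) := Real.sqrt_sq hB0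
  show (1/T) * A ≤ Real.exp (-ν * t) * ‖f‖
  rw [one_div, ← div_eq_inv_mul, div_le_iff₀ hT]
  calc A ≤ T * (Real.exp (-ν*t) * ‖f‖) := hAB
    _ = Real.exp (-ν*t) * ‖f‖ * T := by ring
end

section
/- Gaussian fourth-moment computation for the lift adjoint bound: let κ = N(0, I_d) on ℝ^d, write v̄ = (−1, v) ∈ ℝ^{d+1}, and let X : [0,T]×ℝ^d → ℝ^{d+1} be a vector field with weak derivatives ∂_i X_j ∈ L²(μ̄). Then ‖v̄·∇̄(v̄·X∘π) − (∇̄·X)∘π‖²_{L²(μ̄⊗κ)} ≤ 2 ∑_{i,j=0}^d ‖∂_i X_j‖²_{L²(μ̄)}, where ∇̄ is the gradient in (t,x). -/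
open MeasureTheory ProbabilityTheory Real Filter
open scoped ENNReal NNReal

namespace G4M



noncomputable def J (n : ℕ) : ℝ := ∫ x : ℝ, x ^ n * Real.exp (-x ^ 2 / 2)

lemma intJ (n : ℕ) : Integrable (fun x : ℝ => x ^ n * Real.exp (-x ^ 2 / 2)) := by
  have h := integrable_rpow_mul_exp_neg_mul_sq (b := (2:ℝ)⁻¹) (by norm_num) (s := (n : ℝ))
    (lt_of_lt_of_le (by norm_num) (Nat.cast_nonneg n))
  have : (fun x : ℝ => x ^ (n : ℝ) * Real.exp (-(2:ℝ)⁻¹ * x ^ 2))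
      = fun x : ℝ => x ^ n * Real.exp (-x ^ 2 / 2) := by
    funext x
    rw [Real.rpow_natCast]
    congr 1
    ring
  rwa [this] at h

lemma tendsto_top (k : ℕ) :
    Tendsto (fun x : ℝ => x ^ k * Real.exp (-x ^ 2 / 2)) atTop (nhds 0) := by
  have h := rpow_mul_exp_neg_mul_sq_isLittleO_exp_neg (b := (2:ℝ)⁻¹) (by norm_num) (k : ℝ)
  have h2 : Tendsto (fun x : ℝ => Real.exp (-(1 / 2) * x)) atTop (nhds 0) := by
    have : Tendsto (fun x : ℝ => -(1 / 2) * x) atTop atBot :=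
      Tendsto.const_mul_atTop_of_neg (by norm_num) tendsto_id
    exact Real.tendsto_exp_atBot.comp this
  have h3 := h.isBigO.trans_tendsto h2
  have : (fun x : ℝ => x ^ (k : ℝ) * Real.exp (-(2:ℝ)⁻¹ * x ^ 2))
      = fun x : ℝ => x ^ k * Real.exp (-x ^ 2 / 2) := by
    funext x; rw [Real.rpow_natCast]; congr 1; ring
  rwa [this] at h3

lemma tendsto_bot (k : ℕ) :
    Tendsto (fun x : ℝ => x ^ k * Real.exp (-x ^ 2 / 2)) atBot (nhds 0) := by
  have h := ((tendsto_top k).comp tendsto_neg_atBot_atTop).const_mul ((-1 : ℝ) ^ k)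
  rw [mul_zero] at h
  have heq : ((fun x : ℝ => (-1 : ℝ) ^ k * ((fun x : ℝ => x ^ k * Real.exp (-x ^ 2 / 2)) ∘ Neg.neg) x))
      = fun x : ℝ => x ^ k * Real.exp (-x ^ 2 / 2) := by
    funext x
    have h1 : ((-1 : ℝ)) ^ k * (-1 : ℝ) ^ k = 1 := by
      rw [← pow_add]; exact Even.neg_one_pow ⟨k, rfl⟩
    have h2 : (-x) ^ k = (-1 : ℝ) ^ k * x ^ k := by rw [neg_pow]
    simp only [Function.comp_apply, h2, neg_sq]
    calc (-1 : ℝ) ^ k * ((-1) ^ k * x ^ k * Real.exp (-x ^ 2 / 2))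
        = ((-1 : ℝ) ^ k * (-1) ^ k) * (x ^ k * Real.exp (-x ^ 2 / 2)) := by ring
      _ = x ^ k * Real.exp (-x ^ 2 / 2) := by rw [h1, one_mul]
  rwa [heq] at h

lemma hasDeriv_exp_part (x : ℝ) :
    HasDerivAt (fun x : ℝ => Real.exp (-x ^ 2 / 2)) (-x * Real.exp (-x ^ 2 / 2)) x := by
  have h1 : HasDerivAt (fun x : ℝ => -x ^ 2 / 2) (-x) x := by
    have := ((hasDerivAt_pow 2 x).neg.div_const 2)
    refine this.congr_deriv ?_
    push_cast; ring
  have := h1.exp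
  convert this using 1
  ring

lemma J_step (n : ℕ) : J (n + 2) = (n + 1 : ℝ) * J n := by
  have hderiv : ∀ x : ℝ, HasDerivAt (fun x : ℝ => x ^ (n + 1) * Real.exp (-x ^ 2 / 2))
      ((n + 1 : ℝ) * (x ^ n * Real.exp (-x ^ 2 / 2)) - x ^ (n + 2) * Real.exp (-x ^ 2 / 2)) x := by
    intro x
    have := (hasDerivAt_pow (n + 1) x).mul (hasDeriv_exp_part x)
    refine this.congr_deriv ?_
    push_cast; ring
  have hint : Integrable (fun x : ℝ =>
      (n + 1 : ℝ) * (x ^ n * Real.exp (-x ^ 2 / 2)) - x ^ (n + 2) * Real.exp (-x ^ 2 / 2)) :=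
    ((intJ n).const_mul _).sub (intJ (n + 2))
  have h0 := MeasureTheory.integral_of_hasDerivAt_of_tendsto hderiv hint
    (tendsto_bot (n + 1)) (tendsto_top (n + 1))
  rw [sub_zero] at h0
  have h1 := h0
  rw [MeasureTheory.integral_sub (((intJ n).const_mul _)) (intJ (n + 2)),
    MeasureTheory.integral_const_mul, sub_eq_zero] at h1
  rw [J, J, ← h1]

lemma J_zero : J 0 = Real.sqrt (2 * π) := by
  have h := integral_gaussian (1 / 2 : ℝ)
  have e1 : (fun x : ℝ => Real.exp (-(1 / 2 : ℝ) * x ^ 2)) = fun x : ℝ => x ^ 0 * Real.exp (-x ^ 2 / 2) := by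
    funext x; rw [pow_zero, one_mul]; congr 1; ring
  have e2 : Real.sqrt (π / (1 / 2)) = Real.sqrt (2 * π) := by norm_num [mul_comm]
  rw [J, ← e1, h, e2]

lemma tendsto_negexp_top : Tendsto (fun x : ℝ => -Real.exp (-x ^ 2 / 2)) atTop (nhds 0) := by
  have := (tendsto_top 0).neg
  rw [neg_zero] at this
  exact this.congr fun x => by simp

lemma tendsto_negexp_bot : Tendsto (fun x : ℝ => -Real.exp (-x ^ 2 / 2)) atBot (nhds 0) := by
  have := (tendsto_bot 0).neg
  rw [neg_zero] at this
  exact this.congr fun x => by simp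

lemma J_one : J 1 = 0 := by
  have hderiv : ∀ x : ℝ, HasDerivAt (fun x : ℝ => -Real.exp (-x ^ 2 / 2))
      (x ^ 1 * Real.exp (-x ^ 2 / 2)) x := by
    intro x
    have := (hasDeriv_exp_part x).neg
    refine this.congr_deriv ?_
    ring
  have h0 := MeasureTheory.integral_of_hasDerivAt_of_tendsto hderiv (intJ 1)
    tendsto_negexp_bot tendsto_negexp_top
  rw [J, h0, sub_self]

lemma J_two : J 2 = Real.sqrt (2 * π) := by
  have := J_step 0
  rw [J_zero] at this
  simpa using this

lemma J_three : J 3 = 0 := by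
  have := J_step 1
  rw [J_one] at this
  simpa using this

lemma J_four : J 4 = 3 * Real.sqrt (2 * π) := by
  have := J_step 2
  rw [J_two] at this
  rw [this]
  norm_num


lemma J_def (n : ℕ) : J n = ∫ x : ℝ, x ^ n * Real.exp (-x ^ 2 / 2) := rfl


lemma pdf_eq (x : ℝ) : gaussianPDFReal 0 1 x = (Real.sqrt (2 * π))⁻¹ * Real.exp (-x ^ 2 / 2) := by
  rw [gaussianPDFReal]
  norm_num

lemma gauss_eq_withDensity : gaussianReal 0 1
    = volume.withDensity (fun x => ((gaussianPDFReal 0 1 x).toNNReal : ℝ≥0∞)) := by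
  rw [gaussianReal_of_var_ne_zero 0 one_ne_zero]
  rfl

lemma integrable_pow_gauss (n : ℕ) : Integrable (fun x : ℝ => x ^ n) (gaussianReal 0 1) := by
  rw [gauss_eq_withDensity]
  rw [integrable_withDensity_iff ((measurable_gaussianPDFReal 0 1).real_toNNReal.coe_nnreal_ennreal)
    (by filter_upwards with x; exact ENNReal.coe_lt_top)]
  have : (fun x : ℝ => x ^ n * (((gaussianPDFReal 0 1 x).toNNReal : ℝ≥0∞)).toReal) =
      fun x : ℝ => (Real.sqrt (2 * π))⁻¹ * (x ^ n * Real.exp (-x ^ 2 / 2)) := by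
    funext x
    rw [ENNReal.coe_toReal, Real.coe_toNNReal _ (gaussianPDFReal_nonneg 0 1 x), pdf_eq]
    ring
  rw [this]
  exact (intJ n).const_mul _

lemma integral_pow_gauss (n : ℕ) :
    ∫ x, x ^ n ∂(gaussianReal 0 1) = (Real.sqrt (2 * π))⁻¹ * J n := by
  rw [gauss_eq_withDensity,
    integral_withDensity_eq_integral_smul ((measurable_gaussianPDFReal 0 1).real_toNNReal) (fun x => x ^ n)]
  have : (fun x : ℝ => (gaussianPDFReal 0 1 x).toNNReal • x ^ n) =
      fun x : ℝ => (Real.sqrt (2 * π))⁻¹ * (x ^ n * Real.exp (-x ^ 2 / 2)) := by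
    funext x
    rw [NNReal.smul_def, smul_eq_mul, Real.coe_toNNReal _ (gaussianPDFReal_nonneg 0 1 x), pdf_eq]
    ring
  rw [this, MeasureTheory.integral_const_mul, J_def]


noncomputable def gm (n : ℕ) : ℝ := ∫ x, x ^ n ∂(gaussianReal 0 1)

lemma sqrt2pi_ne : Real.sqrt (2 * π) ≠ 0 :=
  ne_of_gt (Real.sqrt_pos.mpr (by positivity))

lemma gm0 : gm 0 = 1 := by rw [gm]; simp

lemma gm1 : gm 1 = 0 := by rw [gm, integral_pow_gauss, J_one, mul_zero]

lemma gm2 : gm 2 = 1 := by rw [gm, integral_pow_gauss, J_two]; exact inv_mul_cancel₀ sqrt2pi_ne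

lemma gm3 : gm 3 = 0 := by rw [gm, integral_pow_gauss, J_three, mul_zero]

lemma gm4 : gm 4 = 3 := by
  rw [gm, integral_pow_gauss, J_four]
  field_simp

def GSyn : Type := ℝ

def GSyn.toR (x : GSyn) : ℝ := x

noncomputable instance : MeasureSpace GSyn :=
  { toMeasurableSpace := inferInstanceAs (MeasurableSpace ℝ)
    volume := gaussianReal 0 1 }

instance : IsProbabilityMeasure (volume : Measure GSyn) :=
  inferInstanceAs (IsProbabilityMeasure (gaussianReal 0 1))

instance : SigmaFinite (volume : Measure GSyn) := inferInstance

lemma prod_moment (d : ℕ) (c : Fin d → ℕ) :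
    ∫ v : Fin d → ℝ, ∏ p, (v p) ^ (c p) ∂(Measure.pi fun _ => gaussianReal 0 1)
    = ∏ p, gm (c p) :=
  MeasureTheory.integral_fintype_prod_eq_prod (𝕜 := ℝ) (E := fun _ => ℝ)
    (fun p (x : ℝ) => x ^ (c p))

lemma prod_integrable (d : ℕ) (c : Fin d → ℕ) :
    Integrable (fun v : Fin d → ℝ => ∏ p, (v p) ^ (c p))
      (Measure.pi fun _ => gaussianReal 0 1) :=
  Integrable.fintype_prod (E := ℝ) (f := fun p (x : ℝ) => x ^ (c p))
    (fun p => integrable_pow_gauss (c p))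



variable {d : ℕ}

noncomputable def mm (i : Fin (d+1)) (k : ℕ) : ℝ := if i = 0 then (-1 : ℝ)^k else gm k

def sing (i : Fin (d+1)) (n : ℕ) : Fin (d+1) → ℕ := Pi.single i n

lemma sing_same (i : Fin (d+1)) (n : ℕ) : sing i n i = n := by simp [sing]

lemma sing_ne {i a : Fin (d+1)} (h : a ≠ i) (n : ℕ) : sing i n a = 0 := by simp [sing, Pi.single_eq_of_ne h]

lemma sing_apply (i : Fin (d+1)) (n : ℕ) (a : Fin (d+1)) :
    sing i n a = if a = i then n else 0 := by simp [sing, Pi.single_apply]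

lemma mm_zero (a : Fin (d+1)) : mm a 0 = 1 := by
  rw [mm]; split <;> simp [gm0]

lemma mm_two (a : Fin (d+1)) : mm a 2 = 1 := by
  rw [mm]; split <;> norm_num [gm2]

lemma mm_four (a : Fin (d+1)) : mm a 4 = if a = 0 then 1 else 3 := by
  rw [mm]; split <;> norm_num [gm4]

lemma mm_odd {a : Fin (d+1)} (ha : a ≠ 0) {n : ℕ} (hn : n = 1 ∨ n = 3) : mm a n = 0 := by
  rcases hn with h | h <;> simp [mm, ha, h, gm1, gm3]

lemma prod_mm_single (i : Fin (d+1)) (n : ℕ) :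
    (∏ a, mm a (sing i n a)) = mm i n := by
  rw [Finset.prod_eq_single i (fun b _ hb => by rw [sing_ne hb]; exact mm_zero b)
    (fun h => absurd (Finset.mem_univ i) h)]
  rw [sing_same]

lemma prod_mm_pair {i j : Fin (d+1)} (hij : i ≠ j) (ni nj : ℕ) :
    (∏ a, mm a ((sing i ni + sing j nj) a)) = mm i ni * mm j nj := by
  rw [← Finset.prod_subset (Finset.subset_univ ({i, j} : Finset (Fin (d+1))))
    (fun a _ ha => by
      simp only [Finset.mem_insert, Finset.mem_singleton, not_or] at ha
      rw [Pi.add_apply, sing_ne ha.1, sing_ne ha.2]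
      exact mm_zero a)]
  rw [Finset.prod_insert (by simp [hij]), Finset.prod_singleton]
  rw [Pi.add_apply, Pi.add_apply, sing_same, sing_same,
    sing_ne hij.symm, sing_ne hij, add_zero, zero_add]

lemma prod_mm_zero2 {c : Fin (d+1) → ℕ} {a b : Fin (d+1)} (hab : a ≠ b)
    (hca : c a = 1 ∨ c a = 3) (hcb : c b = 1 ∨ c b = 3) :
    (∏ x, mm x (c x)) = 0 := by
  rcases eq_or_ne a 0 with h0 | h0
  · have hb : b ≠ 0 := fun h => hab (h0.trans h.symm)
    exact Finset.prod_eq_zero (Finset.mem_univ b) (mm_odd hb hcb)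
  · exact Finset.prod_eq_zero (Finset.mem_univ a) (mm_odd h0 hca)

lemma eval2 (i j : Fin (d+1)) :
    (∏ a, mm a ((sing i 1 + sing j 1) a)) = if i = j then 1 else 0 := by
  rcases eq_or_ne i j with hij | hij
  · subst hij
    have hce : (sing i 1 + sing i 1) = sing i 2 := by
      ext a; by_cases h : a = i <;> simp [sing_apply, h]
    rw [hce, prod_mm_single, mm_two, if_pos rfl]
  · rw [if_neg hij]
    refine prod_mm_zero2 hij ?_ ?_
    · left; simp [Pi.add_apply, sing_apply, hij]
    · left; simp [Pi.add_apply, sing_apply, hij.symm]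
variable {d : ℕ}

lemma eval4 (i j k l : Fin (d+1)) :
    (∏ a, mm a ((sing i 1 + sing j 1 + sing k 1 + sing l 1) a))
    = (if i = j then (1:ℝ) else 0) * (if k = l then 1 else 0)
      + (if i = k then (1:ℝ) else 0) * (if j = l then 1 else 0)
      + (if i = l then (1:ℝ) else 0) * (if j = k then 1 else 0)
      - (if i = 0 ∧ j = 0 ∧ k = 0 ∧ l = 0 then 2 else 0) := by
  rcases eq_or_ne i j with hij | hij
  · subst hij
    rcases eq_or_ne k l with hkl | hkl
    · subst hkl
      rcases eq_or_ne i k with hik | hik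
      · subst hik
        have hce : (sing i 1 + sing i 1 + sing i 1 + sing i 1) = sing i 4 := by
          ext a; by_cases h : a = i <;> simp [sing_apply, h]
        rw [hce, prod_mm_single, mm_four]
        rcases eq_or_ne i 0 with h0 | h0 <;> simp [h0] <;> norm_num
      · have hce : (sing i 1 + sing i 1 + sing k 1 + sing k 1) = sing i 2 + sing k 2 := by
          ext a; by_cases h1 : a = i <;> by_cases h2 : a = k <;> simp_all [sing_apply]
        rw [hce, prod_mm_pair hik, mm_two, mm_two]
        have hn : ¬(i = 0 ∧ i = 0 ∧ k = 0 ∧ k = 0) := fun h => hik (h.1.trans h.2.2.1.symm)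
        have hn2 : ¬(i = 0 ∧ k = 0) := fun h => hik (h.1.trans h.2.symm)
        simp [hik, hn, hn2]
    · have hck : (sing i 1 + sing i 1 + sing k 1 + sing l 1) k = 1
          ∨ (sing i 1 + sing i 1 + sing k 1 + sing l 1) k = 3 := by
        rcases eq_or_ne k i with h | h
        · right
          have h' : i ≠ l := fun hh => hkl (h.trans hh)
          simp [Pi.add_apply, sing_apply, h, hkl, h']
        · left; simp [Pi.add_apply, sing_apply, h, hkl]
      have hcl : (sing i 1 + sing i 1 + sing k 1 + sing l 1) l = 1
          ∨ (sing i 1 + sing i 1 + sing k 1 + sing l 1) l = 3 := by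
        rcases eq_or_ne l i with h | h
        · right
          have h' : i ≠ k := fun hh => hkl (hh.symm.trans h.symm)
          simp [Pi.add_apply, sing_apply, h, Ne.symm hkl, h']
        · left; simp [Pi.add_apply, sing_apply, h, Ne.symm hkl]
      have hn : ¬(i = 0 ∧ i = 0 ∧ k = 0 ∧ l = 0) := fun h => hkl (h.2.2.1.trans h.2.2.2.symm)
      rw [prod_mm_zero2 hkl hck hcl, if_neg hkl, if_neg hn]
      rcases eq_or_ne i k with h1 | h1
      · have h2 : i ≠ l := fun h => hkl (h1.symm.trans h)
        simp [h1, h2, hkl]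
      · simp [h1]
  · rcases eq_or_ne k l with hkl | hkl
    · subst hkl
      have hci : (sing i 1 + sing j 1 + sing k 1 + sing k 1) i = 1
          ∨ (sing i 1 + sing j 1 + sing k 1 + sing k 1) i = 3 := by
        rcases eq_or_ne i k with h | h
        · right
          have h' : ¬(k = j) := fun hh => hij (h.trans hh)
          simp [Pi.add_apply, sing_apply, h, hij, h']
        · left; simp [Pi.add_apply, sing_apply, h, hij]
      have hcj : (sing i 1 + sing j 1 + sing k 1 + sing k 1) j = 1
          ∨ (sing i 1 + sing j 1 + sing k 1 + sing k 1) j = 3 := by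
        rcases eq_or_ne j k with h | h
        · right
          have h' : ¬(k = i) := fun hh => hij (hh.symm.trans h.symm)
          simp [Pi.add_apply, sing_apply, h, Ne.symm hij, h']
        · left; simp [Pi.add_apply, sing_apply, h, Ne.symm hij]
      have hn : ¬(i = 0 ∧ j = 0 ∧ k = 0 ∧ k = 0) := fun h => hij (h.1.trans h.2.1.symm)
      rw [prod_mm_zero2 hij hci hcj, if_neg hij, if_neg hn]
      rcases eq_or_ne i k with h1 | h1
      · have h2 : j ≠ k := fun h => hij (h1.trans h.symm)
        simp [h1, h2]
      · simp [h1]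
    · rcases eq_or_ne i k with hik | hik
      · subst hik
        rcases eq_or_ne j l with hjl | hjl
        · subst hjl
          have hce : (sing i 1 + sing j 1 + sing i 1 + sing j 1) = sing i 2 + sing j 2 := by
            ext a; by_cases h1 : a = i <;> by_cases h2 : a = j <;> simp_all [sing_apply]
          rw [hce, prod_mm_pair hij, mm_two, mm_two]
          have hn : ¬(i = 0 ∧ j = 0 ∧ i = 0 ∧ j = 0) := fun h => hij (h.1.trans h.2.1.symm)
          simp [hij, hn]
        · have hcj : (sing i 1 + sing j 1 + sing i 1 + sing l 1) j = 1
              ∨ (sing i 1 + sing j 1 + sing i 1 + sing l 1) j = 3 := by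
            left; simp [Pi.add_apply, sing_apply, Ne.symm hij, hjl]
          have hcl : (sing i 1 + sing j 1 + sing i 1 + sing l 1) l = 1
              ∨ (sing i 1 + sing j 1 + sing i 1 + sing l 1) l = 3 := by
            rcases eq_or_ne l i with h | h
            · right; simp [Pi.add_apply, sing_apply, h, Ne.symm hjl, hij]
            · left; simp [Pi.add_apply, sing_apply, h, Ne.symm hjl]
          have hn : ¬(i = 0 ∧ j = 0 ∧ i = 0 ∧ l = 0) := fun h => hjl (h.2.1.trans h.2.2.2.symm)
          rw [prod_mm_zero2 hjl hcj hcl, if_neg hij, if_neg hjl, if_neg hn]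
          simp [Ne.symm hij]
      · rcases eq_or_ne i l with hil | hil
        · subst hil
          rcases eq_or_ne j k with hjk | hjk
          · subst hjk
            have hce : (sing i 1 + sing j 1 + sing j 1 + sing i 1) = sing i 2 + sing j 2 := by
              ext a; by_cases h1 : a = i <;> by_cases h2 : a = j <;> simp_all [sing_apply]
            rw [hce, prod_mm_pair hij, mm_two, mm_two]
            have hn : ¬(i = 0 ∧ j = 0 ∧ j = 0 ∧ i = 0) := fun h => hij (h.1.trans h.2.1.symm)
            have hn2 : ¬(i = 0 ∧ j = 0 ∧ i = 0) := fun h => hij (h.1.trans h.2.1.symm)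
            simp [hij, hn, hn2]
          · have hcj : (sing i 1 + sing j 1 + sing k 1 + sing i 1) j = 1
                ∨ (sing i 1 + sing j 1 + sing k 1 + sing i 1) j = 3 := by
              left; simp [Pi.add_apply, sing_apply, Ne.symm hij, hjk]
            have hck : (sing i 1 + sing j 1 + sing k 1 + sing i 1) k = 1
                ∨ (sing i 1 + sing j 1 + sing k 1 + sing i 1) k = 3 := by
              left; simp [Pi.add_apply, sing_apply, Ne.symm hik, Ne.symm hjk, hkl]
            have hn : ¬(i = 0 ∧ j = 0 ∧ k = 0 ∧ i = 0) := fun h => hij (h.1.trans h.2.1.symm)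
            rw [prod_mm_zero2 hjk hcj hck, if_neg hij, if_neg hik, if_neg hn]
            simp [hjk]
        · have hci : (sing i 1 + sing j 1 + sing k 1 + sing l 1) i = 1
              ∨ (sing i 1 + sing j 1 + sing k 1 + sing l 1) i = 3 := by
            left; simp [Pi.add_apply, sing_apply, hij, hik, hil]
          have hn : ¬(i = 0 ∧ j = 0 ∧ k = 0 ∧ l = 0) := fun h => hij (h.1.trans h.2.1.symm)
          rcases eq_or_ne j k with hjk | hjk
          · have hlj : l ≠ j := fun h => hkl (hjk.symm.trans h.symm)
            have hcl : (sing i 1 + sing j 1 + sing k 1 + sing l 1) l = 1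
                ∨ (sing i 1 + sing j 1 + sing k 1 + sing l 1) l = 3 := by
              left; simp [Pi.add_apply, sing_apply, Ne.symm hil, hlj, Ne.symm hkl]
            rw [prod_mm_zero2 hil hci hcl, if_neg hij, if_neg hik, if_neg hil, if_neg hn]
            simp
          · have hck : (sing i 1 + sing j 1 + sing k 1 + sing l 1) k = 1
                ∨ (sing i 1 + sing j 1 + sing k 1 + sing l 1) k = 3 := by
              left; simp [Pi.add_apply, sing_apply, Ne.symm hik, Ne.symm hjk, hkl]
            rw [prod_mm_zero2 hik hci hck, if_neg hij, if_neg hik, if_neg hil, if_neg hn]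
            simp



variable {d : ℕ}

noncomputable def kap (d : ℕ) : Measure (Fin d → ℝ) := Measure.pi fun _ => gaussianReal 0 1

instance : IsProbabilityMeasure (kap d) := by
  rw [kap]; infer_instance

noncomputable def PP (c : Fin (d+1) → ℕ) : (Fin d → ℝ) → ℝ :=
  fun v => ∏ a, (Fin.cons (-1) v : Fin (d+1) → ℝ) a ^ (c a)

lemma PP_eq (c : Fin (d+1) → ℕ) :
    PP c = fun v => (-1:ℝ)^(c 0) * ∏ p : Fin d, (v p)^(c p.succ) := by
  funext v
  rw [PP, Fin.prod_univ_succ]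
  simp [Fin.cons_zero, Fin.cons_succ]

lemma PP_int (c : Fin (d+1) → ℕ) : Integrable (PP c) (kap d) := by
  rw [PP_eq, kap]
  exact (prod_integrable d _).const_mul _

lemma integral_PP (c : Fin (d+1) → ℕ) :
    ∫ v, PP c v ∂(kap d) = ∏ a, mm a (c a) := by
  rw [PP_eq, kap]
  rw [MeasureTheory.integral_const_mul, prod_moment, Fin.prod_univ_succ]
  have h0 : mm (0 : Fin (d+1)) (c 0) = (-1:ℝ)^(c 0) := by simp [mm]
  rw [h0]
  refine congrArg _ (Finset.prod_congr rfl (fun p _ => by simp [mm, Fin.succ_ne_zero]))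

lemma PP_add (c c' : Fin (d+1) → ℕ) (v : Fin d → ℝ) :
    PP (c + c') v = PP c v * PP c' v := by
  simp [PP, Pi.add_apply, pow_add, Finset.prod_mul_distrib]

lemma PP_sing (i : Fin (d+1)) (v : Fin d → ℝ) :
    PP (sing i 1) v = (Fin.cons (-1) v : Fin (d+1) → ℝ) i := by
  rw [PP, Finset.prod_eq_single i (fun b _ hb => by rw [sing_ne hb, pow_zero])
    (fun h => absurd (Finset.mem_univ i) h), sing_same, pow_one]

lemma PP_quad (i j k l : Fin (d+1)) (v : Fin d → ℝ) :
    PP (sing i 1 + sing j 1 + sing k 1 + sing l 1) v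
      = (Fin.cons (-1) v : Fin (d+1) → ℝ) i * (Fin.cons (-1) v : Fin (d+1) → ℝ) j
        * (Fin.cons (-1) v : Fin (d+1) → ℝ) k * (Fin.cons (-1) v : Fin (d+1) → ℝ) l := by
  rw [PP_add, PP_add, PP_add, PP_sing, PP_sing, PP_sing, PP_sing]

lemma PP_pair (i j : Fin (d+1)) (v : Fin d → ℝ) :
    PP (sing i 1 + sing j 1) v
      = (Fin.cons (-1) v : Fin (d+1) → ℝ) i * (Fin.cons (-1) v : Fin (d+1) → ℝ) j := by
  rw [PP_add, PP_sing, PP_sing]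

variable {d : ℕ}

lemma sq_expand (t : ℝ) (f : Fin (d+1) → Fin (d+1) → ℝ) :
    ((∑ i, ∑ j, f i j) - t)^2
      = (∑ i, ∑ j, ∑ k, ∑ l, f i j * f k l) - 2 * t * (∑ i, ∑ j, f i j) + t^2 := by
  have h : (∑ i, ∑ j, f i j) * (∑ i, ∑ j, f i j)
      = ∑ i, ∑ j, ∑ k, ∑ l, f i j * f k l := by
    rw [Finset.sum_mul_sum]
    refine Finset.sum_congr rfl (fun i _ => ?_)
    rw [Finset.sum_comm]
    refine Finset.sum_congr rfl (fun j _ => ?_)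
    rw [Finset.sum_mul_sum]
  calc ((∑ i, ∑ j, f i j) - t)^2
      = (∑ i, ∑ j, f i j) * (∑ i, ∑ j, f i j) - 2 * t * (∑ i, ∑ j, f i j) + t^2 := by ring
    _ = _ := by rw [h]

set_option maxHeartbeats 1600000 in
lemma inner_le (A : Matrix (Fin (d+1)) (Fin (d+1)) ℝ) :
    ∫ v, ((∑ i, ∑ j, (Fin.cons (-1) v : Fin (d+1) → ℝ) i
        * (Fin.cons (-1) v : Fin (d+1) → ℝ) j * A i j)
      - ∑ i, A i i)^2 ∂(kap d)
    ≤ 2 * ∑ i, ∑ j, (A i j)^2 := by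
  set t := ∑ i, A i i with ht
  have hpt : ∀ v : Fin d → ℝ,
      ((∑ i, ∑ j, (Fin.cons (-1) v : Fin (d+1) → ℝ) i
          * (Fin.cons (-1) v : Fin (d+1) → ℝ) j * A i j) - t)^2
      = ((∑ i, ∑ j, ∑ k, ∑ l,
          (A i j * A k l) * PP (sing i 1 + sing j 1 + sing k 1 + sing l 1) v)
        - 2 * t * (∑ i, ∑ j, A i j * PP (sing i 1 + sing j 1) v)) + t^2 := by
    intro v
    rw [sq_expand t (fun i j => (Fin.cons (-1) v : Fin (d+1) → ℝ) i
        * (Fin.cons (-1) v : Fin (d+1) → ℝ) j * A i j)]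
    congr 1
    congr 1
    · refine Finset.sum_congr rfl (fun i _ => Finset.sum_congr rfl (fun j _ =>
        Finset.sum_congr rfl (fun k _ => Finset.sum_congr rfl (fun l _ => ?_))))
      rw [PP_quad]
      ring
    · refine congrArg _ (Finset.sum_congr rfl (fun i _ => Finset.sum_congr rfl (fun j _ => ?_)))
      rw [PP_pair]
      ring
  have hQint : Integrable (fun v => ∑ i, ∑ j, ∑ k, ∑ l,
      (A i j * A k l) * PP (sing i 1 + sing j 1 + sing k 1 + sing l 1) v) (kap d) :=
    integrable_finset_sum _ (fun i _ => integrable_finset_sum _ (fun j _ =>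
      integrable_finset_sum _ (fun k _ => integrable_finset_sum _ (fun l _ =>
        (PP_int _).const_mul _))))
  have hLint : Integrable (fun v => ∑ i, ∑ j, A i j * PP (sing i 1 + sing j 1) v) (kap d) :=
    integrable_finset_sum _ (fun i _ => integrable_finset_sum _ (fun j _ =>
      (PP_int _).const_mul _))
  have hLint2 : Integrable (fun v => 2 * t * ∑ i, ∑ j, A i j * PP (sing i 1 + sing j 1) v)
      (kap d) := by exact hLint.const_mul (2*t)
  have hsubint : Integrable (fun v => (∑ i, ∑ j, ∑ k, ∑ l,
      (A i j * A k l) * PP (sing i 1 + sing j 1 + sing k 1 + sing l 1) v)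
      - 2 * t * (∑ i, ∑ j, A i j * PP (sing i 1 + sing j 1) v)) (kap d) := by
    exact hQint.sub hLint2
  have hI : ∫ v, ((∑ i, ∑ j, (Fin.cons (-1) v : Fin (d+1) → ℝ) i
        * (Fin.cons (-1) v : Fin (d+1) → ℝ) j * A i j) - t)^2 ∂(kap d)
      = ((∑ i, ∑ j, ∑ k, ∑ l, (A i j * A k l) *
          ((if i = j then (1:ℝ) else 0) * (if k = l then 1 else 0)
            + (if i = k then (1:ℝ) else 0) * (if j = l then 1 else 0)
            + (if i = l then (1:ℝ) else 0) * (if j = k then 1 else 0)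
            - (if i = 0 ∧ j = 0 ∧ k = 0 ∧ l = 0 then 2 else 0)))
        - 2 * t * (∑ i, ∑ j, A i j * (if i = j then (1:ℝ) else 0))) + t^2 := by
    rw [integral_congr_ae (Eventually.of_forall hpt)]
    rw [integral_add hsubint (integrable_const _)]
    rw [integral_sub hQint hLint2]
    rw [MeasureTheory.integral_const_mul]
    congr 1
    congr 1
    · rw [integral_finset_sum _ (fun i _ => integrable_finset_sum _ (fun j _ =>
        integrable_finset_sum _ (fun k _ => integrable_finset_sum _ (fun l _ =>
          (PP_int _).const_mul _))))]
      refine Finset.sum_congr rfl (fun i _ => ?_)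
      rw [integral_finset_sum _ (fun j _ => integrable_finset_sum _ (fun k _ =>
        integrable_finset_sum _ (fun l _ => (PP_int _).const_mul _)))]
      refine Finset.sum_congr rfl (fun j _ => ?_)
      rw [integral_finset_sum _ (fun k _ => integrable_finset_sum _ (fun l _ =>
        (PP_int _).const_mul _))]
      refine Finset.sum_congr rfl (fun k _ => ?_)
      rw [integral_finset_sum _ (fun l _ => (PP_int _).const_mul _)]
      refine Finset.sum_congr rfl (fun l _ => ?_)
      rw [MeasureTheory.integral_const_mul, integral_PP, eval4]
    · refine congrArg _ ?_
      rw [integral_finset_sum _ (f := fun i v => ∑ j, A i j * PP (sing i 1 + sing j 1) v)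
        (fun i _ => integrable_finset_sum _ (fun j _ =>
        (PP_int _).const_mul _))]
      refine Finset.sum_congr rfl (fun i _ => ?_)
      rw [integral_finset_sum _ (fun j _ => (PP_int _).const_mul _)]
      refine Finset.sum_congr rfl (fun j _ => ?_)
      rw [MeasureTheory.integral_const_mul, integral_PP, eval2]
    · simp
  have hL : (∑ i, ∑ j, A i j * (if i = j then (1:ℝ) else 0)) = t := by
    rw [ht]
    refine Finset.sum_congr rfl (fun i _ => ?_)
    simp [mul_ite, Finset.sum_ite_eq]
  have hsplit : ∀ (i j k l : Fin (d+1)), (A i j * A k l) *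
          ((if i = j then (1:ℝ) else 0) * (if k = l then 1 else 0)
            + (if i = k then (1:ℝ) else 0) * (if j = l then 1 else 0)
            + (if i = l then (1:ℝ) else 0) * (if j = k then 1 else 0)
            - (if i = 0 ∧ j = 0 ∧ k = 0 ∧ l = 0 then 2 else 0))
      = (if i = j then A i j else 0) * (if k = l then A k l else 0)
        + (if i = k then (1:ℝ) else 0) * (if j = l then A i j * A k l else 0)
        + (if i = l then (1:ℝ) else 0) * (if j = k then A i j * A k l else 0)
        - (if i = 0 ∧ j = 0 ∧ k = 0 ∧ l = 0 then 2 * (A i j * A k l) else 0) := by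
    intro i j k l
    split_ifs <;> ring
  have hT1 : (∑ i : Fin (d+1), ∑ j : Fin (d+1), ∑ k : Fin (d+1), ∑ l : Fin (d+1),
      (if i = j then A i j else 0) * (if k = l then A k l else 0)) = t^2 := by
    have h1 : ∀ i j : Fin (d+1), (∑ k : Fin (d+1), ∑ l : Fin (d+1),
        (if i = j then A i j else 0) * (if k = l then A k l else 0))
        = (if i = j then A i j else 0) * t := by
      intro i j
      simp only [← Finset.mul_sum]
      congr 1
      rw [ht]
      exact Finset.sum_congr rfl (fun k _ => by simp [Finset.sum_ite_eq])
    simp only [h1]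
    simp only [← Finset.sum_mul]
    have h2 : (∑ i : Fin (d+1), ∑ j : Fin (d+1), if i = j then A i j else 0) = t := by
      rw [ht]
      exact Finset.sum_congr rfl (fun i _ => by simp [Finset.sum_ite_eq])
    rw [h2, sq]
  have hT2 : (∑ i : Fin (d+1), ∑ j : Fin (d+1), ∑ k : Fin (d+1), ∑ l : Fin (d+1),
      (if i = k then (1:ℝ) else 0) * (if j = l then A i j * A k l else 0))
      = ∑ i, ∑ j, (A i j)^2 := by
    refine Finset.sum_congr rfl (fun i _ => Finset.sum_congr rfl (fun j _ => ?_))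
    have hk : ∀ k : Fin (d+1), (∑ l : Fin (d+1),
        (if i = k then (1:ℝ) else 0) * (if j = l then A i j * A k l else 0))
        = (if i = k then (1:ℝ) else 0) * (A i j * A k j) := by
      intro k
      simp only [← Finset.mul_sum]
      congr 1
      simp [Finset.sum_ite_eq]
    simp only [hk]
    simp [ite_mul, Finset.sum_ite_eq, sq]
  have hT3 : (∑ i : Fin (d+1), ∑ j : Fin (d+1), ∑ k : Fin (d+1), ∑ l : Fin (d+1),
      (if i = l then (1:ℝ) else 0) * (if j = k then A i j * A k l else 0))
      = ∑ i, ∑ j, A i j * A j i := by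
    refine Finset.sum_congr rfl (fun i _ => Finset.sum_congr rfl (fun j _ => ?_))
    have hk : ∀ k : Fin (d+1), (∑ l : Fin (d+1),
        (if i = l then (1:ℝ) else 0) * (if j = k then A i j * A k l else 0))
        = (if j = k then A i j * A k i else 0) := by
      intro k
      rcases eq_or_ne j k with h | h
      · simp [h, ite_mul, Finset.sum_ite_eq]
      · simp [h]
    simp only [hk]
    simp [Finset.sum_ite_eq]
  have hT4 : (∑ i : Fin (d+1), ∑ j : Fin (d+1), ∑ k : Fin (d+1), ∑ l : Fin (d+1),
      (if i = 0 ∧ j = 0 ∧ k = 0 ∧ l = 0 then 2 * (A i j * A k l) else 0))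
      = 2 * (A 0 0)^2 := by
    simp [ite_and, Finset.sum_ite_eq', sq]
  have hQ : (∑ i, ∑ j, ∑ k, ∑ l, (A i j * A k l) *
          ((if i = j then (1:ℝ) else 0) * (if k = l then 1 else 0)
            + (if i = k then (1:ℝ) else 0) * (if j = l then 1 else 0)
            + (if i = l then (1:ℝ) else 0) * (if j = k then 1 else 0)
            - (if i = 0 ∧ j = 0 ∧ k = 0 ∧ l = 0 then 2 else 0)))
      = t^2 + (∑ i, ∑ j, (A i j)^2) + (∑ i, ∑ j, A i j * A j i) - 2 * (A 0 0)^2 := by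
    simp only [hsplit]
    simp only [Finset.sum_add_distrib, Finset.sum_sub_distrib]
    rw [hT1, hT2, hT3, hT4]
  rw [hI, hL, hQ]
  have hswap : (∑ i : Fin (d+1), ∑ j : Fin (d+1), (A j i)^2)
      = ∑ i : Fin (d+1), ∑ j : Fin (d+1), (A i j)^2 := Finset.sum_comm
  have h3 : (∑ i : Fin (d+1), ∑ j : Fin (d+1), A i j * A j i)
      ≤ ∑ i : Fin (d+1), ∑ j : Fin (d+1), (A i j)^2 := by
    have h := Finset.sum_le_sum (s := Finset.univ) (fun i (_ : i ∈ Finset.univ) =>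
      Finset.sum_le_sum (s := Finset.univ) (fun j (_ : j ∈ Finset.univ) =>
        (by nlinarith [sq_nonneg (A i j - A j i)] : A i j * A j i ≤ ((A i j)^2 + (A j i)^2)/2)))
    have h2 : (∑ i : Fin (d+1), ∑ j : Fin (d+1), ((A i j)^2 + (A j i)^2)/2)
        = ∑ i : Fin (d+1), ∑ j : Fin (d+1), (A i j)^2 := by
      simp only [add_div, Finset.sum_add_distrib]
      simp only [← Finset.sum_div]
      rw [hswap]
      ring
    rw [h2] at h
    exact h
  nlinarith [sq_nonneg (A 0 0), h3]


end G4M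

open G4M

/-- Gaussian fourth-moment bound for the lift adjoint. With
`κ = N(0, I_d)` the standard Gaussian on `ℝ^d`, `v̄ = (−1, v) ∈ ℝ^{d+1}`, and
`M(ω) = (∂_i X_j(ω))` the (weak) derivative matrix of a vector field `X` with entries
in `L²(μ̄)`, one has
`‖v̄·∇̄(v̄·X∘π) − (∇̄·X)∘π‖²_{L²(μ̄⊗κ)} ≤ 2 ∑_{i,j} ‖∂_i X_j‖²_{L²(μ̄)}`,
i.e. the `L²` norm of `∑_{i,j} v̄_i v̄_j M_{ij} − tr M` over `μ̄⊗κ` is controlled. -/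
theorem gaussian_fourth_moment_lift_bound
    (d : ℕ) {Ω : Type*} [MeasurableSpace Ω] (μbar : Measure Ω) [IsFiniteMeasure μbar]
    (M : Ω → Matrix (Fin (d+1)) (Fin (d+1)) ℝ)
    (hM : ∀ i j, MemLp (fun ω => M ω i j) 2 μbar) :
    ∫ ω, (∫ v : Fin d → ℝ,
        ((∑ i, ∑ j, (Fin.cons (-1) v : Fin (d+1) → ℝ) i
            * (Fin.cons (-1) v : Fin (d+1) → ℝ) j * M ω i j)
          - ∑ i, M ω i i)^2
        ∂(Measure.pi fun _ : Fin d => gaussianReal 0 1)) ∂μbar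
      ≤ 2 * ∑ i, ∑ j, ∫ ω, (M ω i j)^2 ∂μbar := by
  have hin : ∀ ω, (∫ v : Fin d → ℝ,
        ((∑ i, ∑ j, (Fin.cons (-1) v : Fin (d+1) → ℝ) i
            * (Fin.cons (-1) v : Fin (d+1) → ℝ) j * M ω i j)
          - ∑ i, M ω i i)^2
        ∂(Measure.pi fun _ : Fin d => gaussianReal 0 1))
      ≤ 2 * ∑ i, ∑ j, (M ω i j)^2 := fun ω => inner_le (M ω)
  have hnn : ∀ ω, 0 ≤ ∫ v : Fin d → ℝ,
        ((∑ i, ∑ j, (Fin.cons (-1) v : Fin (d+1) → ℝ) i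
            * (Fin.cons (-1) v : Fin (d+1) → ℝ) j * M ω i j)
          - ∑ i, M ω i i)^2
        ∂(Measure.pi fun _ : Fin d => gaussianReal 0 1) :=
    fun ω => integral_nonneg (fun v => sq_nonneg _)
  have hGint : Integrable (fun ω => 2 * ∑ i, ∑ j, (M ω i j)^2) μbar := by
    apply Integrable.const_mul
    exact integrable_finset_sum _ (fun i _ => integrable_finset_sum _ (fun j _ =>
      (hM i j).integrable_sq))
  refine le_trans (integral_mono_of_nonneg (Eventually.of_forall hnn) hGint
    (Eventually.of_forall hin)) ?_
  rw [MeasureTheory.integral_const_mul]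
  refine mul_le_mul_of_nonneg_left (le_of_eq ?_) (by norm_num)
  rw [integral_finset_sum _ (fun i _ => integrable_finset_sum _ (fun j _ =>
    (hM i j).integrable_sq))]
  refine Finset.sum_congr rfl (fun i _ => ?_)
  rw [integral_finset_sum _ (fun j _ => (hM i j).integrable_sq)]
end
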